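/- arXiv:1501.02964 — 14 statements merged into one kernel-verified Lean document; each statement's English description precedes it below -/
import Mathlib

section
/- Let R be a *-ring which is *-regular, i.e., for every x in R there exists a projection p such that xR = pR (meaning {x*r : r ∈ R} = {p*r : r ∈ R}). Then every idempotent e of R is *-clean: there exist a projection p and a unit u of R with e = p + u. -/
/-!
If `eR = pR` with `e` idempotent and `p` a projection, then `p e = e` and `e p = p`. These two
relations make `u = e + p - 1` an involution, `u² = 1`, so `e = (1 - p) + u` writes `e` as the
projection `1 - p` plus a unit.
-/

lemma IsIdempotentElem.mul_eq_of_mem_range_mul {M : Type*} [Semigroup M] {p x : M}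
    (hp : IsIdempotentElem p) (hx : x ∈ Set.range (p * ·)) : p * x = x := by
  obtain ⟨r, rfl⟩ := hx
  rw [← mul_assoc, hp.eq]

lemma add_sub_one_sq_eq_one {R : Type*} [Ring R] {e p : R}
    (he : IsIdempotentElem e) (hp : IsIdempotentElem p) (hpe : p * e = e) (hep : e * p = p) :
    (e + p - 1) ^ 2 = 1 := by
  calc (e + p - 1) ^ 2 = e * e + e * p + p * e + p * p - 2 * e - 2 * p + 1 := by noncomm_ring
    _ = 1 := by rw [he.eq, hp.eq, hpe, hep]; noncomm_ring

/-- In a *-regular *-ring, every idempotent is *-clean. -/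
theorem star_regular_idempotent_star_clean {R : Type*} [Ring R] [StarRing R]
    (hreg : ∀ x : R, ∃ p : R, p ^ 2 = p ∧ star p = p ∧
      (Set.range fun r => x * r) = (Set.range fun r => p * r))
    (e : R) (he : e ^ 2 = e) :
    ∃ p u : R, p ^ 2 = p ∧ star p = p ∧ IsUnit u ∧ e = p + u := by
  obtain ⟨p, hp_sq, hp_star, hrange⟩ := hreg e
  have he : IsIdempotentElem e := (sq e).symm.trans he
  have hp : IsStarProjection p := ⟨(sq p).symm.trans hp_sq, hp_star⟩
  have hpe : p * e = e := hp.isIdempotentElem.mul_eq_of_mem_range_mul (hrange ▸ ⟨e, he.eq⟩)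
  have hep : e * p = p := he.mul_eq_of_mem_range_mul (hrange ▸ ⟨p, hp.isIdempotentElem.eq⟩)
  refine ⟨1 - p, e + p - 1, hp.one_sub.pow_eq two_ne_zero, hp.one_sub.isSelfAdjoint,
    .of_pow_eq_one (add_sub_one_sq_eq_one he hp.isIdempotentElem hpe hep) two_ne_zero,
    by noncomm_ring⟩
end

section
/- Let R be a Boolean *-ring, i.e., a *-ring in which x^2 = x for every x. Then R is *-clean (every element is the sum of a projection and a unit) if and only if the involution is the identity map, i.e., star x = x for all x ∈ R. -/
namespace BooleanRing

variable {R : Type*} [BooleanRing R]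

theorem eq_one_of_isUnit {u : R} (hu : IsUnit u) : u = 1 :=
  (IsIdempotentElem.iff_eq_one_of_isUnit hu).mp (isIdempotentElem u)

/-- Since `1` is the only unit and `1 + 1 = 0`, the only possible decomposition is
`a = (a + 1) + 1`. -/
theorem forall_exists_isStarProjection_add_isUnit_iff [StarRing R] :
    (∀ a : R, ∃ p u : R, IsStarProjection p ∧ IsUnit u ∧ a = p + u) ↔ ∀ x : R, star x = x := by
  constructor
  · intro h x
    obtain ⟨p, u, hp, hu, rfl⟩ := h x
    rw [eq_one_of_isUnit hu, star_add, hp.isSelfAdjoint.star_eq, star_one]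
  · intro h a
    refine ⟨a + 1, 1, ⟨isIdempotentElem _, h _⟩, isUnit_one, ?_⟩
    rw [add_assoc, add_self, add_zero]

end BooleanRing

/-- A Boolean *-ring is *-clean iff the involution is the identity. -/
theorem boolean_star_clean_iff_star_id {R : Type*} [Ring R] [StarRing R]
    (hbool : ∀ x : R, x ^ 2 = x) :
    (∀ a : R, ∃ p u : R, p ^ 2 = p ∧ star p = p ∧ IsUnit u ∧ a = p + u) ↔
      (∀ x : R, star x = x) := by
  let : BooleanRing R :=
    { ‹Ring R› with isIdempotentElem := fun x => by rw [IsIdempotentElem, ← sq, hbool] }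
  have isStarProjection_iff (p : R) : IsStarProjection p ↔ p ^ 2 = p ∧ star p = p := by
    rw [sq]
    exact ⟨fun hp => ⟨hp.isIdempotentElem, hp.isSelfAdjoint⟩, fun ⟨h₁, h₂⟩ => ⟨h₁, h₂⟩⟩
  simpa only [isStarProjection_iff, and_assoc] using
    BooleanRing.forall_exists_isStarProjection_add_isUnit_iff (R := R)
end

section
/- Let R be a *-ring in which 2 is a unit. Then the following are equivalent: (1) R is clean and every unit of R is self-adjoint (star u = u for every unit u); (2) R is *-clean and the involution is the identity map (star x = x for all x ∈ R). -/
/-! If `e` is idempotent then `1 - 2e` squares to `1`, so it is a unit. When every unit is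
self-adjoint, `1 - 2e` is self-adjoint, hence so is `2e`, and cancelling the unit `2` shows that
`e` is a projection. Writing an arbitrary element as `e + u` with `e` idempotent and `u` a unit,
it is then self-adjoint as well, so the involution is the identity and the clean decompositions
are `*`-clean ones. -/

theorem IsIdempotentElem.one_sub_two_mul_mul_self {R : Type*} [Ring R] {e : R}
    (he : IsIdempotentElem e) : (1 - 2 * e) * (1 - 2 * e) = 1 := by
  have expand : (1 - 2 * e) * (1 - 2 * e) = 1 - 4 * e + 4 * (e * e) := by noncomm_ring
  rw [expand, he.eq]
  noncomm_ring

theorem IsIdempotentElem.isUnit_one_sub_two_mul {R : Type*} [Ring R] {e : R}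
    (he : IsIdempotentElem e) : IsUnit (1 - 2 * e) :=
  ⟨⟨_, _, he.one_sub_two_mul_mul_self, he.one_sub_two_mul_mul_self⟩, rfl⟩

theorem IsSelfAdjoint.of_one_sub_two_mul {R : Type*} [Ring R] [StarRing R] {x : R}
    (h2 : IsUnit (2 : R)) (hx : IsSelfAdjoint (1 - 2 * x)) : IsSelfAdjoint x := by
  have h2x : IsSelfAdjoint (2 * x) := by
    simpa using (IsSelfAdjoint.one R).sub hx
  have h : 2 * star x = 2 * x := by
    simpa [IsSelfAdjoint, star_mul, mul_two, two_mul] using h2x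
  exact h2.mul_left_cancel h

theorem star_eq_self_of_clean_of_units_selfAdjoint {R : Type*} [Ring R] [StarRing R]
    (h2 : IsUnit (2 : R)) (hclean : ∀ a : R, ∃ e u : R, e ^ 2 = e ∧ IsUnit u ∧ a = e + u)
    (hunits : ∀ u : R, IsUnit u → star u = u) (x : R) : star x = x := by
  obtain ⟨e, u, he, hu, rfl⟩ := hclean x
  have he : IsIdempotentElem e := by rw [IsIdempotentElem, ← sq, he]
  have hse : IsSelfAdjoint e :=
    .of_one_sub_two_mul h2 (hunits _ he.isUnit_one_sub_two_mul)
  rw [star_add, hse.star_eq, hunits u hu]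

/-- For a *-ring with 2 a unit: R is clean with all units self-adjoint iff
R is *-clean with identity involution. -/
theorem clean_units_self_adjoint_iff_star_clean_star_id {R : Type*} [Ring R] [StarRing R]
    (h2 : IsUnit (2 : R)) :
    ((∀ a : R, ∃ e u : R, e ^ 2 = e ∧ IsUnit u ∧ a = e + u) ∧
        (∀ u : R, IsUnit u → star u = u)) ↔
      ((∀ a : R, ∃ p u : R, p ^ 2 = p ∧ star p = p ∧ IsUnit u ∧ a = p + u) ∧
        (∀ x : R, star x = x)) := by
  constructor
  · rintro ⟨hclean, hunits⟩
    have hstar := star_eq_self_of_clean_of_units_selfAdjoint h2 hclean hunits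
    refine ⟨fun a => ?_, hstar⟩
    obtain ⟨e, u, he, hu, ha⟩ := hclean a
    exact ⟨e, u, he, hstar e, hu, ha⟩
  · rintro ⟨hstarClean, hstar⟩
    refine ⟨fun a => ?_, fun u _ => hstar u⟩
    obtain ⟨p, u, hp, -, hu, ha⟩ := hstarClean a
    exact ⟨p, u, hp, hu, ha⟩
end

section
/- Let R be a *-ring. The following are equivalent: (1) R is *-clean and 2 is a unit of R; (2) every element of R is the sum of a unit and a self-adjoint square root of 1, i.e., for every a ∈ R there exist t and a unit u with t^2 = 1, star t = t, and a = t + u. -/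
/-!
Once `2` is invertible, `p ↦ 2 * p - 1` and `t ↦ ⅟2 * (1 + t)` are mutually inverse between
projections and self-adjoint square roots of `1`, and `a = p + u` rescales to
`2 * a - 1 = (2 * p - 1) + 2 * u`. Conversely, writing `1 = t + u` gives `(1 - t) * (1 + t) = 0`
with `1 - t = u` a unit, so `t = -1` and `u = 2` is a unit.
-/

section

variable {R : Type*} [Ring R]

theorem IsIdempotentElem.two_mul_sub_one_sq {p : R} (hp : IsIdempotentElem p) :
    (2 * p - 1) ^ 2 = 1 :=
  calc (2 * p - 1) ^ 2 = 4 * (p * p - p) + 1 := by noncomm_ring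
    _ = 1 := by rw [hp.eq, sub_self, mul_zero, zero_add]

theorem isIdempotentElem_invOf_two_mul_one_add [Invertible (2 : R)] {t : R} (ht : t ^ 2 = 1) :
    IsIdempotentElem (⅟2 * (1 + t)) := by
  have hsq : (1 + t) * (1 + t) = 2 * (1 + t) :=
    calc (1 + t) * (1 + t) = 1 + 2 * t + t ^ 2 := by noncomm_ring
      _ = 2 * (1 + t) := by rw [ht]; noncomm_ring
  have hcomm : Commute (⅟2 : R) (1 + t) := (Commute.ofNat_left 2 _).invOf_left
  calc ⅟2 * (1 + t) * (⅟2 * (1 + t)) = ⅟2 * (⅟2 * ((1 + t) * (1 + t))) := by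
        rw [mul_assoc, ← mul_assoc (1 + t), ← hcomm.eq, mul_assoc (⅟2 : R) (1 + t)]
    _ = ⅟2 * (1 + t) := by rw [hsq, invOf_mul_cancel_left]

theorem eq_neg_one_of_sq_eq_one_of_isUnit_one_sub {t : R} (ht : t ^ 2 = 1) (hu : IsUnit (1 - t)) :
    t = -1 := by
  have h : (1 - t) * (1 + t) = 0 :=
    calc (1 - t) * (1 + t) = 1 - t ^ 2 := by noncomm_ring
      _ = 0 := by rw [ht, sub_self]
  exact eq_neg_of_add_eq_zero_right (hu.mul_right_eq_zero.mp h)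

section StarRing

variable [StarRing R]

theorem IsStarProjection.isSelfAdjoint_two_mul_sub_one {p : R} (hp : IsStarProjection p) :
    IsSelfAdjoint (2 * p - 1) :=
  (((IsSelfAdjoint.ofNat 2).commute_iff hp.isSelfAdjoint).mp (Commute.ofNat_left 2 p)).sub
    (.one R)

theorem IsSelfAdjoint.invOf_two_mul_one_add [Invertible (2 : R)] {t : R} (ht : IsSelfAdjoint t) :
    IsSelfAdjoint (⅟2 * (1 + t)) :=
  ((IsSelfAdjoint.ofNat 2).invOf.commute_iff ((IsSelfAdjoint.one R).add ht)).mp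
    (Commute.ofNat_left 2 _).invOf_left

end StarRing

end

/-- R is *-clean with 2 a unit iff every element is the sum of a unit and a
self-adjoint square root of 1. -/
theorem star_clean_two_unit_iff_sum_unit_self_adjoint_sqrt_one {R : Type*} [Ring R] [StarRing R] :
    ((∀ a : R, ∃ p u : R, p ^ 2 = p ∧ star p = p ∧ IsUnit u ∧ a = p + u) ∧
        IsUnit (2 : R)) ↔
      (∀ a : R, ∃ t u : R, t ^ 2 = 1 ∧ star t = t ∧ IsUnit u ∧ a = t + u) := by
  constructor
  · rintro ⟨hclean, h2⟩ a
    let : Invertible (2 : R) := h2.invertible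
    obtain ⟨p, u, hp, hsp, hu, hdecomp⟩ := hclean (⅟2 * (a + 1))
    have hproj : IsStarProjection p := ⟨(sq p).symm.trans hp, hsp⟩
    refine ⟨2 * p - 1, 2 * u, hproj.isIdempotentElem.two_mul_sub_one_sq,
      hproj.isSelfAdjoint_two_mul_sub_one, h2.mul hu, ?_⟩
    calc a = 2 * (⅟2 * (a + 1)) - 1 := by rw [mul_invOf_cancel_left, add_sub_cancel_right]
      _ = 2 * p - 1 + 2 * u := by rw [hdecomp]; noncomm_ring
  · intro hdecomp
    have h2 : IsUnit (2 : R) := by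
      obtain ⟨t, u, ht, -, hu, hone⟩ := hdecomp 1
      have hu' : u = 1 - t := eq_sub_of_add_eq' hone.symm
      rw [hu', eq_neg_one_of_sq_eq_one_of_isUnit_one_sub ht (hu' ▸ hu)] at hu
      simpa [one_add_one_eq_two] using hu
    let : Invertible (2 : R) := h2.invertible
    refine ⟨fun a ↦ ?_, h2⟩
    obtain ⟨t, u, ht, hst, hu, hdecomp⟩ := hdecomp (2 * a - 1)
    refine ⟨⅟2 * (1 + t), ⅟2 * u, (isIdempotentElem_invOf_two_mul_one_add ht).pow_succ_eq 1,
      IsSelfAdjoint.invOf_two_mul_one_add hst, (isUnit_of_invertible _).mul hu, ?_⟩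
    calc a = ⅟2 * (1 + (2 * a - 1)) := by rw [add_sub_cancel, invOf_mul_cancel_left]
      _ = ⅟2 * (1 + t) + ⅟2 * u := by rw [hdecomp, ← mul_add, add_assoc]
end

section
/- Let R be a nontrivial *-ring. The following are equivalent: (1) R is *-clean and 0 and 1 are the only projections of R; (2) R is clean and 0 and 1 are the only idempotents of R; (3) R is a local ring, i.e., for every a ∈ R, either a or 1 − a is a unit. -/
/-!
An idempotent that is a unit is `1`. Hence in a local ring, where `e` or `1 - e` is a unit, the
only idempotents (a fortiori the only projections) are `0` and `1`. So all three conditions say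
that every `a` is `0` or `1` plus a unit, i.e. that `a` or `1 - a` is a unit.
-/

section Ring

variable {R : Type*} [Ring R]

theorem IsIdempotentElem.eq_zero_or_eq_one_of_forall_isUnit_or_isUnit_one_sub
    (hR : ∀ a : R, IsUnit a ∨ IsUnit (1 - a)) {e : R} (he : IsIdempotentElem e) :
    e = 0 ∨ e = 1 := by
  refine (hR e).symm.imp (fun hu => ?_) fun hu => (IsIdempotentElem.iff_eq_one_of_isUnit hu).1 he
  simpa using (IsIdempotentElem.iff_eq_one_of_isUnit hu).1 he.one_sub

theorem forall_isUnit_or_isUnit_one_sub_iff_forall_eq_zero_or_one_add_isUnit :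
    (∀ a : R, IsUnit a ∨ IsUnit (1 - a)) ↔
      ∀ a : R, ∃ e u : R, (e = 0 ∨ e = 1) ∧ IsUnit u ∧ a = e + u := by
  constructor
  · intro h a
    rcases h a with hu | hu
    · exact ⟨0, a, .inl rfl, hu, (zero_add a).symm⟩
    · exact ⟨1, -(1 - a), .inr rfl, hu.neg, by abel⟩
  · intro h a
    obtain ⟨e, u, rfl | rfl, hu, rfl⟩ := h a
    · simpa using Or.inl hu
    · simpa using Or.inr hu.neg

end Ring

theorem star_clean_trivial_projections_tfae_general {R : Type*} [Ring R] [StarRing R] :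
    List.TFAE [
      (∀ a : R, ∃ p u : R, p ^ 2 = p ∧ star p = p ∧ IsUnit u ∧ a = p + u) ∧
        (∀ p : R, p ^ 2 = p ∧ star p = p → p = 0 ∨ p = 1),
      (∀ a : R, ∃ e u : R, e ^ 2 = e ∧ IsUnit u ∧ a = e + u) ∧
        (∀ e : R, e ^ 2 = e → e = 0 ∨ e = 1),
      ∀ a : R, IsUnit a ∨ IsUnit (1 - a)] := by
  have hloc := forall_isUnit_or_isUnit_one_sub_iff_forall_eq_zero_or_one_add_isUnit (R := R)
  have htriv (h : ∀ a : R, IsUnit a ∨ IsUnit (1 - a)) (e : R) (he : e ^ 2 = e) :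
      e = 0 ∨ e = 1 :=
    IsIdempotentElem.eq_zero_or_eq_one_of_forall_isUnit_or_isUnit_one_sub h ((sq e).symm.trans he)
  tfae_have 1 → 3
  | ⟨hclean, hproj⟩ => hloc.2 fun a => by
    obtain ⟨p, u, hp, hsp, hu, rfl⟩ := hclean a
    exact ⟨p, u, hproj p ⟨hp, hsp⟩, hu, rfl⟩
  tfae_have 2 → 3
  | ⟨hclean, hidem⟩ => hloc.2 fun a => by
    obtain ⟨e, u, he, hu, rfl⟩ := hclean a
    exact ⟨e, u, hidem e he, hu, rfl⟩
  tfae_have 3 → 1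
  | h => ⟨fun a => by
      obtain ⟨e, u, he, hu, rfl⟩ := hloc.1 h a
      rcases he with rfl | rfl
      · exact ⟨0, u, by simp, by simp, hu, rfl⟩
      · exact ⟨1, u, by simp, by simp, hu, rfl⟩,
    fun p hp => htriv h p hp.1⟩
  tfae_have 3 → 2
  | h => ⟨fun a => by
      obtain ⟨e, u, he, hu, rfl⟩ := hloc.1 h a
      rcases he with rfl | rfl
      · exact ⟨0, u, by simp, hu, rfl⟩
      · exact ⟨1, u, by simp, hu, rfl⟩,
    htriv h⟩
  tfae_finish

/-- For a nontrivial *-ring: *-clean with trivial projections iff clean with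
trivial idempotents iff local. -/
theorem star_clean_trivial_projections_tfae {R : Type*} [Ring R] [StarRing R] [Nontrivial R] :
    List.TFAE [
      (∀ a : R, ∃ p u : R, p ^ 2 = p ∧ star p = p ∧ IsUnit u ∧ a = p + u) ∧
        (∀ p : R, p ^ 2 = p ∧ star p = p → p = 0 ∨ p = 1),
      (∀ a : R, ∃ e u : R, e ^ 2 = e ∧ IsUnit u ∧ a = e + u) ∧
        (∀ e : R, e ^ 2 = e → e = 0 ∨ e = 1),
      ∀ a : R, IsUnit a ∨ IsUnit (1 - a)] :=
  star_clean_trivial_projections_tfae_general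
end

section
/- Let R be a *-ring and a ∈ R. The following are equivalent: (1) there exist an integer m ≥ 1, a projection e, and a unit u such that a^m = e*u and a, e, u pairwise commute; (2) there exist a projection f and a unit v such that a = f + v, f*v = v*f, and a*f is nilpotent; (3) there exists a projection p commuting with a such that a*p is a unit in the corner ring pRp (i.e., there exists y with y = p*y*p, (a*p)*y = p, and y*(a*p) = p) and a*(1 − p) is nilpotent; (4) there exists b commuting with a such that star (a*b) = a*b, b = b*a*b, and a − a^2*b is nilpotent. -/
/-!
Everything passes through condition (3): a projection `p` commuting with `a` splits `a` into
`a * p`, invertible in the corner ring `pRp`, and `a * (1 - p)`, nilpotent. If `y` inverts `a * p`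
in `pRp`, then `a * p - (1 - p)` is a unit of `R` with inverse `y - (1 - p)`; adding the commuting
nilpotent `a * (1 - p)` gives the unit `a - (1 - p)` of (2), and its `m`-th power, with `m` such
that `(a * (1 - p)) ^ m = 0`, gives the unit of (1). Conversely the projections `e`, `1 - f` and
`a * b` of (1), (2) and (4) have the corner inverses `u⁻¹ * a ^ (m - 1) * e`, `v⁻¹ * (1 - f)`
and `b`.
-/

section

variable {R : Type*} [Ring R]

theorem isIdempotentElem_iff_sq_eq_self {M : Type*} [Monoid M] {p : M} :
    IsIdempotentElem p ↔ p ^ 2 = p := by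
  rw [sq]; rfl

theorem Commute.one_sub_right {x p : R} (h : Commute x p) : Commute x (1 - p) :=
  (Commute.one_right x).sub_right h

theorem Commute.mul_sub_one_sub_right {x b p : R} (hb : Commute x b) (hp : Commute x p) :
    Commute x (b * p - (1 - p)) :=
  (hb.mul_right hp).sub_right hp.one_sub_right

/-- `x` is invertible in the corner ring `pRp`; that `x` itself lies in `pRp` is not part of it. -/
def IsCornerUnit (p x : R) : Prop :=
  ∃ y : R, y = p * y * p ∧ x * y = p ∧ y * x = p

namespace IsIdempotentElem

variable {p a c x : R}

theorem self_mul_eq_of_corner (hp : IsIdempotentElem p) (hx : p * x * p = x) : p * x = x := by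
  rw [← hx, ← mul_assoc, ← mul_assoc, hp.eq]

theorem mul_self_eq_of_corner (hp : IsIdempotentElem p) (hx : p * x * p = x) : x * p = x := by
  rw [← hx, mul_assoc, hp.eq]

theorem corner_mul_of_commute (hp : IsIdempotentElem p) (h : Commute x p) :
    p * (x * p) * p = x * p := by
  rw [h.eq, ← mul_assoc, hp.eq, mul_assoc, h.eq, ← mul_assoc, hp.eq]

theorem isUnit_sub_one_sub_of_isCornerUnit (hp : IsIdempotentElem p) (hx : p * x * p = x)
    (h : IsCornerUnit p x) : IsUnit (x - (1 - p)) := by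
  obtain ⟨y, hy, hxy, hyx⟩ := h
  have hpx := hp.self_mul_eq_of_corner hx
  have hxp := hp.mul_self_eq_of_corner hx
  have hpy := hp.self_mul_eq_of_corner hy.symm
  have hyp := hp.mul_self_eq_of_corner hy.symm
  refine ⟨⟨x - (1 - p), y - (1 - p), ?_, ?_⟩, rfl⟩ <;>
    simp only [mul_sub, sub_mul, mul_one, one_mul, hxy, hyx, hpx, hxp, hpy, hyp, hp.eq] <;>
    abel

theorem isCornerUnit_mul_of_mul_mul_eq (hp : IsIdempotentElem p) (hap : Commute a p)
    (hcp : Commute c p) (hac : Commute a c) (h : a * c * p = p) : IsCornerUnit p (a * p) := by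
  have key : a * c * p * p = p := by rw [mul_assoc, hp.eq, h]
  refine ⟨c * p, (hp.corner_mul_of_commute hcp).symm, ?_, ?_⟩
  · calc a * p * (c * p) = a * (p * c) * p := by simp only [mul_assoc]
      _ = p := by rw [← hcp.eq, ← mul_assoc, key]
  · calc c * p * (a * p) = c * (p * a) * p := by simp only [mul_assoc]
      _ = p := by rw [← hap.eq, ← mul_assoc, ← hac.eq, key]

theorem isCornerUnit_mul_of_isUnit (hp : IsIdempotentElem p) (ha : IsUnit a) (hap : Commute a p) :
    IsCornerUnit p (a * p) := by
  obtain ⟨u, rfl⟩ := ha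
  exact hp.isCornerUnit_mul_of_mul_mul_eq hap hap.units_inv_left (Commute.refl _).units_inv_right
    (by rw [u.mul_inv, one_mul])

theorem isCornerUnit_of_pow_eq_mul {u : R} {m : ℕ} (hp : IsIdempotentElem p) (hap : Commute a p)
    (hu : IsUnit u) (hpu : Commute p u) (hau : Commute a u) (hm : m ≠ 0) (h : a ^ m = p * u) :
    IsCornerUnit p (a * p) := by
  obtain ⟨u, rfl⟩ := hu
  refine hp.isCornerUnit_mul_of_mul_mul_eq (c := ↑u⁻¹ * a ^ (m - 1)) hap
    (hpu.units_inv_right.symm.mul_left (hap.symm.pow_right _).symm)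
    (hau.units_inv_right.mul_right ((Commute.refl a).pow_right _)) ?_
  calc a * (↑u⁻¹ * a ^ (m - 1)) * p = ↑u⁻¹ * (a ^ m * p) := by
        rw [← mul_pow_sub_one hm, hau.units_inv_right.left_comm]; simp only [mul_assoc]
    _ = p := by rw [h, hpu.eq, mul_assoc _ p, hp.eq, ← mul_assoc, u.inv_mul, one_mul]

theorem pow_mul_one_sub_eq_zero {u : R} {m : ℕ} (hp : IsIdempotentElem p) (hap : Commute a p)
    (hpu : Commute p u) (hm : m ≠ 0) (h : a ^ m = p * u) : (a * (1 - p)) ^ m = 0 := by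
  rw [hap.one_sub_right.mul_pow, hp.one_sub.pow_eq hm, h, hpu.eq, mul_assoc, hp.mul_one_sub_self,
    mul_zero]

theorem pow_eq_mul_pow {m : ℕ} (hp : IsIdempotentElem p) (hap : Commute a p) (hm : m ≠ 0)
    (hn : (a * (1 - p)) ^ m = 0) : a ^ m = p * (a * p - (1 - p)) ^ m := by
  have hpX : Commute p (a * p - (1 - p)) := hap.symm.mul_sub_one_sub_right (Commute.refl p)
  have h0 : a ^ m * (1 - p) = 0 := by
    rw [← hp.one_sub.pow_eq hm, ← hap.one_sub_right.mul_pow, hn]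
  calc a ^ m = a ^ m * p := by rwa [mul_sub, mul_one, sub_eq_zero] at h0
    _ = (p * (a * p - (1 - p))) ^ m := by
      rw [mul_sub, hp.mul_one_sub_self, sub_zero, ← mul_assoc, ← hap.eq, mul_assoc, hp.eq,
        hap.mul_pow, hp.pow_eq hm]
    _ = p * (a * p - (1 - p)) ^ m := by rw [hpX.mul_pow, hp.pow_eq hm]

theorem isUnit_sub_one_sub_of_isNilpotent (hp : IsIdempotentElem p) (hap : Commute a p)
    (h : IsCornerUnit p (a * p)) (hn : IsNilpotent (a * (1 - p))) : IsUnit (a - (1 - p)) := by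
  have hcomm : Commute (a * (1 - p)) (a * p - (1 - p)) :=
    Commute.mul_sub_one_sub_right ((Commute.refl a).mul_left hap.one_sub_right.symm)
      (hap.mul_left (Commute.refl p).one_sub_right.symm)
  rw [show a - (1 - p) = a * p - (1 - p) + a * (1 - p) by noncomm_ring]
  exact hn.isUnit_add_left_of_commute
    (hp.isUnit_sub_one_sub_of_isCornerUnit (hp.corner_mul_of_commute hap) h) hcomm

theorem mul_eq_of_corner_inverse {y : R} (hp : IsIdempotentElem p) (hap : Commute a p)
    (hy : y = p * y * p) (hay : a * p * y = p) (hya : y * (a * p) = p) :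
    a * y = p ∧ y * a = p := by
  constructor
  · rw [← hp.self_mul_eq_of_corner hy.symm, ← mul_assoc, hay]
  · rw [← hp.mul_self_eq_of_corner hy.symm, mul_assoc, ← hap.eq, hya]

theorem isCornerUnit_add_mul_one_sub {f v : R} (hf : IsIdempotentElem f) (hv : IsUnit v)
    (hfv : Commute f v) : IsCornerUnit (1 - f) ((f + v) * (1 - f)) := by
  rw [add_mul, hf.mul_one_sub_self, zero_add]
  exact hf.one_sub.isCornerUnit_mul_of_isUnit hv hfv.symm.one_sub_right

end IsIdempotentElem

theorem isIdempotentElem_mul_of_mul_mul_eq {a b : R} (h : b * a * b = b) :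
    IsIdempotentElem (a * b) := by
  rw [IsIdempotentElem, mul_assoc, ← mul_assoc b, h]

theorem isCornerUnit_mul_mul_of_mul_mul_eq {a b : R} (hab : Commute a b) (h : b * a * b = b) :
    IsCornerUnit (a * b) (a * (a * b)) :=
  (isIdempotentElem_mul_of_mul_mul_eq h).isCornerUnit_mul_of_mul_mul_eq
    ((Commute.refl a).mul_right hab) (hab.symm.mul_right (Commute.refl b)) hab
    (isIdempotentElem_mul_of_mul_mul_eq h)

end

/-- Characterizations of strongly π-*-regular elements. -/
theorem strongly_pi_star_regular_tfae {R : Type*} [Ring R] [StarRing R] (a : R) :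
    List.TFAE [
      ∃ m : ℕ, 1 ≤ m ∧ ∃ e u : R, e ^ 2 = e ∧ star e = e ∧ IsUnit u ∧
        a ^ m = e * u ∧ a * e = e * a ∧ a * u = u * a ∧ e * u = u * e,
      ∃ f v : R, f ^ 2 = f ∧ star f = f ∧ IsUnit v ∧ a = f + v ∧ f * v = v * f ∧
        IsNilpotent (a * f),
      ∃ p : R, p ^ 2 = p ∧ star p = p ∧ a * p = p * a ∧
        (∃ y : R, y = p * y * p ∧ (a * p) * y = p ∧ y * (a * p) = p) ∧
        IsNilpotent (a * (1 - p)),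
      ∃ b : R, a * b = b * a ∧ star (a * b) = a * b ∧ b = b * a * b ∧
        IsNilpotent (a - a ^ 2 * b)] := by
  simp only [← isIdempotentElem_iff_sq_eq_self]
  tfae_have 1 → 3
  | ⟨m, hm, e, u, he, hse, hu, ham, hae, hau, heu⟩ =>
    ⟨e, he, hse, hae, he.isCornerUnit_of_pow_eq_mul hae hu heu hau (by omega) ham,
      m, he.pow_mul_one_sub_eq_zero hae heu (by omega) ham⟩
  tfae_have 3 → 1
  | ⟨p, hp, hsp, hap, hcu, n, hn⟩ =>
    ⟨n + 1, by omega, p, _, hp, hsp,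
      (hp.isUnit_sub_one_sub_of_isCornerUnit (hp.corner_mul_of_commute hap) hcu).pow _,
      hp.pow_eq_mul_pow hap n.succ_ne_zero (by rw [pow_succ, hn, zero_mul]), hap,
      ((Commute.refl a).mul_sub_one_sub_right hap).pow_right _,
      ((Commute.symm hap).mul_sub_one_sub_right (Commute.refl p)).pow_right _⟩
  tfae_have 2 → 3
  | ⟨f, v, hf, hsf, hv, hav, hfv, hn⟩ => by
    subst hav
    exact ⟨1 - f, hf.one_sub, by rw [star_sub, star_one, hsf],
      ((Commute.refl f).add_left hfv.symm).one_sub_right, hf.isCornerUnit_add_mul_one_sub hv hfv,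
      by rwa [sub_sub_cancel]⟩
  tfae_have 3 → 2
  | ⟨p, hp, hsp, hap, hcu, hn⟩ =>
    ⟨1 - p, a - (1 - p), hp.one_sub, by rw [star_sub, star_one, hsp],
      hp.isUnit_sub_one_sub_of_isNilpotent hap hcu hn, by abel,
      (Commute.one_sub_right hap).symm.sub_right (Commute.refl _), hn⟩
  tfae_have 3 → 4
  | ⟨p, hp, hsp, hap, ⟨y, hy, hay, hya⟩, hn⟩ =>
    have ⟨hay', hya'⟩ := hp.mul_eq_of_corner_inverse hap hy hay hya
    ⟨y, hay'.trans hya'.symm, hay' ▸ hsp, by rw [hya', hp.self_mul_eq_of_corner hy.symm],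
      by rwa [sq, mul_assoc, hay', ← mul_one a, mul_assoc, ← mul_sub, one_mul]⟩
  tfae_have 4 → 3
  | ⟨b, hab, hsab, hbab, hn⟩ =>
    ⟨a * b, isIdempotentElem_mul_of_mul_mul_eq hbab.symm, hsab, (Commute.refl a).mul_right hab,
      isCornerUnit_mul_mul_of_mul_mul_eq hab hbab.symm,
      by rwa [mul_sub, mul_one, ← mul_assoc, ← sq]⟩
  tfae_finish
end

section
/- Let R be a *-ring and a ∈ R. (i) If a is strongly *-regular, i.e., a = p*u = u*p for some projection p and unit u, then a is strongly π-*-regular. (ii) If a is strongly π-*-regular, then a is strongly *-clean, i.e., a = q + w for some projection q and unit w with q*w = w*q. -/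
/-!
For an idempotent `e`, the Peirce map `(x, y) ↦ e * x + (1 - e) * y` is multiplicative on
elements commuting with `e`, so it sends pairs of units to units.

(i) `w = p * u + (1 - p)` is a unit with `a = p * w`, so `m = 1` works.

(ii) Take `q = 1 - e`. Then `a - (1 - e) = (e * a - (1 - e)) * (1 - (1 - e) * a)`; the `m`-th power
of the first factor is `e * u + (1 - e) * (-1) ^ m`, a unit, and `(1 - e) * a` is nilpotent because
`((1 - e) * a) ^ m = (1 - e) * e * u = 0`.
-/

section Peirce

variable {R : Type*} [Ring R] {e x y : R}

lemma Commute.one_sub_left (hx : Commute e x) : Commute (1 - e) x :=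
  (Commute.one_left x).sub_left hx

lemma Commute.mul_add_one_sub_mul_right {c : R} (hce : Commute c e) (hcx : Commute c x)
    (hcy : Commute c y) : Commute c (e * x + (1 - e) * y) :=
  (hce.mul_right hcx).add_right (((Commute.one_right c).sub_right hce).mul_right hcy)

namespace IsIdempotentElem

lemma mul_mul_add_one_sub_mul (he : IsIdempotentElem e) (x y : R) :
    e * (e * x + (1 - e) * y) = e * x := by
  rw [mul_add, ← mul_assoc, ← mul_assoc, he.eq, he.mul_one_sub_self, zero_mul, add_zero]

lemma mul_add_one_sub_mul_mul (he : IsIdempotentElem e) (hx : Commute e x) (hy : Commute e y)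
    (x' y' : R) :
    (e * x + (1 - e) * y) * (e * x' + (1 - e) * y') = e * (x * x') + (1 - e) * (y * y') := by
  simp only [add_mul, mul_add, mul_assoc, hx.symm.left_comm, hy.symm.left_comm,
    hx.one_sub_left.symm.left_comm, hy.one_sub_left.symm.left_comm]
  simp only [← mul_assoc, he.eq, he.one_sub.eq, he.mul_one_sub_self, he.one_sub_mul_self,
    zero_mul, add_zero, zero_add]

lemma mul_add_one_sub_mul_pow (he : IsIdempotentElem e) (hx : Commute e x) (hy : Commute e y)
    (n : ℕ) : (e * x + (1 - e) * y) ^ n = e * x ^ n + (1 - e) * y ^ n := by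
  induction n with
  | zero => simp
  | succ n ih => rw [pow_succ, ih, he.mul_add_one_sub_mul_mul (hx.pow_right n) (hy.pow_right n),
      ← pow_succ, ← pow_succ]

lemma isUnit_mul_add_one_sub_mul (he : IsIdempotentElem e) (hx : Commute e x) (hy : Commute e y)
    (hxu : IsUnit x) (hyu : IsUnit y) : IsUnit (e * x + (1 - e) * y) := by
  obtain ⟨X, rfl⟩ := hxu
  obtain ⟨Y, rfl⟩ := hyu
  refine ⟨⟨_, e * ↑X⁻¹ + (1 - e) * ↑Y⁻¹, ?_, ?_⟩, rfl⟩
  · rw [he.mul_add_one_sub_mul_mul hx hy, X.mul_inv, Y.mul_inv]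
    noncomm_ring
  · rw [he.mul_add_one_sub_mul_mul hx.units_inv_right hy.units_inv_right, X.inv_mul, Y.inv_mul]
    noncomm_ring

lemma isUnit_sub_one_sub_of_pow_eq_mul {a u : R} {m : ℕ} (he : IsIdempotentElem e)
    (hea : Commute e a) (heu : Commute e u) (hu : IsUnit u) (hm : m ≠ 0) (h : a ^ m = e * u) :
    IsUnit (a - (1 - e)) := by
  have hnil : IsNilpotent ((1 - e) * a) := ⟨m, by
    rw [hea.one_sub_left.mul_pow, he.one_sub.pow_eq hm, h, ← mul_assoc, he.one_sub_mul_self,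
      zero_mul]⟩
  have hfactor : a - (1 - e) = (e * a + (1 - e) * (-1)) * (e * 1 + (1 - e) * (1 - a)) := by
    rw [he.mul_add_one_sub_mul_mul hea (Commute.neg_one_right e)]
    noncomm_ring
  have hleft : IsUnit (e * a + (1 - e) * (-1)) := by
    rw [← isUnit_pow_iff hm, he.mul_add_one_sub_mul_pow hea (Commute.neg_one_right e), h,
      ← mul_assoc, he.eq]
    exact he.isUnit_mul_add_one_sub_mul heu ((Commute.neg_one_right e).pow_right m) hu
      (isUnit_neg_one.pow m)
  have hright : e * 1 + (1 - e) * (1 - a) = 1 - (1 - e) * a := by noncomm_ring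
  rw [hfactor, hright]
  exact hleft.mul hnil.isUnit_one_sub

end IsIdempotentElem

end Peirce

/-- Strongly *-regular elements are strongly π-*-regular, and strongly
π-*-regular elements are strongly *-clean. -/
theorem strongly_star_regular_implies_and_implies_star_clean {R : Type*}
    [Ring R] [StarRing R] (a : R) :
    ((∃ p u : R, p ^ 2 = p ∧ star p = p ∧ IsUnit u ∧ a = p * u ∧ a = u * p) →
      ∃ m : ℕ, 1 ≤ m ∧ ∃ e u : R, e ^ 2 = e ∧ star e = e ∧ IsUnit u ∧
        a ^ m = e * u ∧ a * e = e * a ∧ a * u = u * a ∧ e * u = u * e) ∧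
    ((∃ m : ℕ, 1 ≤ m ∧ ∃ e u : R, e ^ 2 = e ∧ star e = e ∧ IsUnit u ∧
        a ^ m = e * u ∧ a * e = e * a ∧ a * u = u * a ∧ e * u = u * e) →
      ∃ q w : R, q ^ 2 = q ∧ star q = q ∧ IsUnit w ∧ a = q + w ∧ q * w = w * q) := by
  constructor
  · rintro ⟨p, u, hp2, hps, hu, rfl, hpu⟩
    have hp : IsIdempotentElem p := (pow_two p).symm.trans hp2
    replace hpu : Commute p u := hpu
    have hpa : Commute p (p * u) := (Commute.refl p).mul_right hpu
    have hua : Commute u (p * u) := hpu.symm.mul_right (Commute.refl u)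
    refine ⟨1, le_rfl, p, p * u + (1 - p) * 1, hp2, hps,
      hp.isUnit_mul_add_one_sub_mul hpu (Commute.one_right p) hu isUnit_one,
      by rw [pow_one, hp.mul_mul_add_one_sub_mul], hpa.symm.eq, ?_, ?_⟩
    · exact (hpa.symm.mul_add_one_sub_mul_right hua.symm (Commute.one_right _)).eq
    · exact ((Commute.refl p).mul_add_one_sub_mul_right hpu (Commute.one_right p)).eq
  · rintro ⟨m, hm, e, u, he2, hes, hu, ham, hae, -, heu⟩
    have he : IsIdempotentElem e := (pow_two e).symm.trans he2
    have hea : Commute e a := hae.symm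
    refine ⟨1 - e, a - (1 - e), (pow_two _).trans he.one_sub.eq, by rw [star_sub, star_one, hes],
      he.isUnit_sub_one_sub_of_pow_eq_mul hea heu hu (by omega) ham,
      (add_sub_cancel _ _).symm, ?_⟩
    exact (hea.one_sub_left.sub_right (Commute.refl _)).eq
end

section
/- Let R be a *-ring. Then R is both strongly *-clean (every element is the sum of a projection and a unit which commute) and π-regular (for every a there exist n ≥ 1 and b with a^n = a^n * b * a^n) if and only if R is strongly π-*-regular (every element a admits m ≥ 1, a projection e, and a unit u with a^m = e*u and a, e, u pairwise commuting). -/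
/-!
In a strongly *-clean ring every idempotent `e` is self-adjoint: writing `e = p + u` forces
`u = 1 - 2p`, so `e = 1 - p`. A ring whose idempotents are all self-adjoint is abelian, since
`e + e y (1 - e)` is again idempotent and comparing it with its adjoint gives `e y (1 - e) = 0`.
Hence if `a^n b a^n = a^n`, then `e = a^n b` is a central projection and `a^n = e (a^n + 1 - e)`
with the second factor a unit.

Conversely, if `a^m = e u`, then `u⁻¹` is an inner inverse of `a^m`, and
`a - (1 - e) = (a e + 1 - e) (2e - 1) (1 - a (1 - e))` is a unit: the first factor has `m`-th
power `e u + 1 - e`, the second squares to `1`, and `a (1 - e)` is nilpotent.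
-/

def IsPiRegular (R : Type*) [Ring R] : Prop :=
  ∀ a : R, ∃ n : ℕ, 1 ≤ n ∧ ∃ b : R, a ^ n = a ^ n * b * a ^ n

def IsStronglyStarClean (R : Type*) [Ring R] [StarRing R] : Prop :=
  ∀ a : R, ∃ p u : R, p ^ 2 = p ∧ star p = p ∧ IsUnit u ∧ a = p + u ∧ p * u = u * p

def IsStronglyPiStarRegular (R : Type*) [Ring R] [StarRing R] : Prop :=
  ∀ a : R, ∃ m : ℕ, 1 ≤ m ∧ ∃ e u : R, e ^ 2 = e ∧ star e = e ∧ IsUnit u ∧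
    a ^ m = e * u ∧ a * e = e * a ∧ a * u = u * a ∧ e * u = u * e

section

variable {R : Type*} [Ring R]

theorem IsIdempotentElem.add_eq_one_sub_of_isUnit {p u : R} (hp : IsIdempotentElem p)
    (hu : IsUnit u) (hpu : Commute p u) (h : IsIdempotentElem (p + u)) : p + u = 1 - p := by
  have hunit_mul : u * (2 * p + u - 1) = 0 := by
    linear_combination (norm := noncomm_ring) h.eq - hp.eq - hpu.eq
  linear_combination (norm := noncomm_ring) hu.mul_right_eq_zero.1 hunit_mul

theorem commute_of_mul_mul_eq_self (hc : ∀ e : R, IsIdempotentElem e → ∀ x, Commute e x)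
    {x y : R} (h : x * y * x = x) : Commute x y := by
  -- `x y` and `y x` are central idempotents, and each of them equals their product.
  have hxy : IsIdempotentElem (x * y) := by
    unfold IsIdempotentElem; rw [← mul_assoc, h]
  have hyx : IsIdempotentElem (y * x) := by
    unfold IsIdempotentElem; rw [mul_assoc, ← mul_assoc x, h]
  have h1 := (hc _ hyx y).eq
  have h2 := (hc _ hxy x).eq
  have h3 := (hc _ hxy (y * x)).eq
  show x * y = y * x
  linear_combination (norm := noncomm_ring) x * h1 + h3 - h * y - y * h2 + y * h

-- `a` is a unit of the corner ring `e R e`, with inverse `b`.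
theorem IsIdempotentElem.isUnit_add_one_sub {e a b : R} (he : IsIdempotentElem e)
    (hea : e * a = a) (hae : a * e = a) (heb : e * b = b) (hbe : b * e = b) (hab : a * b = e)
    (hba : b * a = e) : IsUnit (a + (1 - e)) := by
  refine ⟨⟨a + (1 - e), b + (1 - e), ?_, ?_⟩, rfl⟩
  · linear_combination (norm := noncomm_ring) hab - hae - heb + he.eq
  · linear_combination (norm := noncomm_ring) hba - hbe - hea + he.eq

theorem IsIdempotentElem.mul_add_one_sub_pow {a e : R} (he : IsIdempotentElem e)
    (hae : Commute a e) (k : ℕ) : (a * e + (1 - e)) ^ k = a ^ k * e + (1 - e) := by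
  induction k with
  | zero => noncomm_ring
  | succ k ih =>
    rw [pow_succ, ih, pow_succ]
    linear_combination (norm := noncomm_ring)
      -(a ^ k * hae.eq * e) + a ^ k * a * he.eq - a ^ k * he.eq - a * he.eq + hae.eq * e + he.eq

theorem IsIdempotentElem.isUnit_sub_one_sub {e : R} (he : IsIdempotentElem e) :
    IsUnit (e - (1 - e)) :=
  IsUnit.of_pow_eq_one (n := 2) (by linear_combination (norm := noncomm_ring) 4 * he.eq)
    two_ne_zero

theorem IsIdempotentElem.isUnit_mul_add_one_sub {e : R} (he : IsIdempotentElem e) (u : Rˣ)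
    (heu : Commute e u) : IsUnit (e * u + (1 - e)) := by
  have heu' : e * u * e = e * u := by rw [mul_assoc, ← heu.eq, ← mul_assoc, he.eq]
  have heu'' : e * ↑u⁻¹ * e = e * ↑u⁻¹ := by
    rw [mul_assoc, ← heu.units_inv_right.eq, ← mul_assoc, he.eq]
  exact he.isUnit_add_one_sub (by rw [← mul_assoc, he.eq]) heu' (by rw [← mul_assoc, he.eq])
    heu'' (by rw [← mul_assoc, heu', Units.mul_inv_cancel_right])
    (by rw [← mul_assoc, heu'', Units.inv_mul_cancel_right])

theorem IsIdempotentElem.isUnit_sub_one_sub_of_pow_eq_mul_s10 {a e : R} {u : Rˣ} {m : ℕ}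
    (hm : m ≠ 0) (he : IsIdempotentElem e) (hae : Commute a e) (heu : Commute e u)
    (h : a ^ m = e * u) : IsUnit (a - (1 - e)) := by
  have hcorner : IsUnit (a * e + (1 - e)) := by
    rw [← isUnit_pow_iff hm, he.mul_add_one_sub_pow hae, h, mul_assoc, ← heu.eq, ← mul_assoc,
      he.eq]
    exact he.isUnit_mul_add_one_sub u heu
  have hnil : IsNilpotent (a * (1 - e)) := by
    refine ⟨m, ?_⟩
    rw [((Commute.one_right a).sub_right hae).mul_pow, he.one_sub.pow_eq hm, h, heu.eq,
      mul_assoc, he.mul_one_sub_self, mul_zero]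
  have hfactor : a - (1 - e) = (a * e + (1 - e)) * (e - (1 - e)) * (1 - a * (1 - e)) :=
    calc a - (1 - e) = (a * e - (1 - e)) * (1 - a * (1 - e)) := by
          linear_combination (norm := noncomm_ring)
            -a * hae.eq - hae.eq - a * a * he.eq + a * hae.eq * e - a * he.eq + hae.eq * e
      _ = (a * e + (1 - e)) * (e - (1 - e)) * (1 - a * (1 - e)) := by
          congr 1
          linear_combination (norm := noncomm_ring) 2 * he.eq - 2 * a * he.eq
  rw [hfactor]
  exact (hcorner.mul he.isUnit_sub_one_sub).mul hnil.isUnit_one_sub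

variable [StarRing R]

theorem mul_mul_one_sub_eq_zero_of_forall_isSelfAdjoint
    (h : ∀ e : R, IsIdempotentElem e → IsSelfAdjoint e) {e : R} (he : IsIdempotentElem e)
    (y : R) : e * y * (1 - e) = 0 := by
  have hidem : IsIdempotentElem (e + e * y * (1 - e)) := by
    unfold IsIdempotentElem
    linear_combination (norm := noncomm_ring)
      he.eq + he.eq * (y * (1 - e)) - e * y * he.eq - e * y * he.eq * y * (1 - e)
  have hstar := (h _ hidem).star_eq
  simp only [star_add, star_mul, star_sub, star_one, (h e he).star_eq] at hstar
  linear_combination (norm := noncomm_ring)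
    -e * hstar - he.eq * (star y * e) - he.eq * y + he.eq * (y * e)

theorem commute_of_forall_isSelfAdjoint
    (h : ∀ e : R, IsIdempotentElem e → IsSelfAdjoint e) {e : R} (he : IsIdempotentElem e)
    (x : R) : Commute e x := by
  have hleft := mul_mul_one_sub_eq_zero_of_forall_isSelfAdjoint h he x
  have hright := mul_mul_one_sub_eq_zero_of_forall_isSelfAdjoint h he.one_sub x
  show e * x = x * e
  linear_combination (norm := noncomm_ring) hleft - hright

theorem IsStronglyStarClean.isSelfAdjoint_of_isIdempotentElem
    (h : IsStronglyStarClean R) {e : R} (he : IsIdempotentElem e) : IsSelfAdjoint e := by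
  obtain ⟨p, u, hp, hps, hu, rfl, hpu⟩ := h e
  rw [IsIdempotentElem.add_eq_one_sub_of_isUnit ((sq p).symm.trans hp) hu hpu he]
  exact (IsSelfAdjoint.one R).sub hps

theorem IsStronglyStarClean.isStronglyPiStarRegular (h : IsStronglyStarClean R)
    (hπ : IsPiRegular R) : IsStronglyPiStarRegular R := by
  have hsa := fun e ↦ h.isSelfAdjoint_of_isIdempotentElem (e := e)
  have hcentral := fun e (he : IsIdempotentElem e) ↦ commute_of_forall_isSelfAdjoint hsa he
  intro a
  obtain ⟨n, hn, b, hb⟩ := hπ a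
  refine ⟨n, hn, ?_⟩
  have hxa : Commute (a ^ n) a := Commute.pow_self a n
  generalize a ^ n = x at hb hxa ⊢
  have hxb : Commute x b := commute_of_mul_mul_eq_self hcentral hb.symm
  have he : IsIdempotentElem (x * b) := by
    unfold IsIdempotentElem; rw [← mul_assoc, ← hb]
  have hxe : Commute (x * b) x := (Commute.refl x).mul_left hxb.symm
  have hbe : Commute (x * b) b := hxb.mul_left (Commute.refl b)
  refine ⟨x * b, x + (1 - x * b), sq (x * b) ▸ he, (hsa _ he).star_eq, ?_, ?_,
    (hcentral _ he a).eq.symm, ?_, (hcentral _ he _).eq⟩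
  · exact he.isUnit_add_one_sub hb.symm (hxe.eq.symm.trans hb.symm)
      (by rw [← mul_assoc, hbe.eq, mul_assoc, he.eq]) (by rw [mul_assoc, he.eq])
      (by rw [← mul_assoc, he.eq]) (by rw [mul_assoc, hb.symm, hxb.eq])
  · linear_combination (norm := noncomm_ring) hb + he.eq
  · exact (hxa.symm.add_right ((Commute.one_right a).sub_right (hcentral _ he a).symm)).eq

theorem IsStronglyPiStarRegular.isPiRegular (h : IsStronglyPiStarRegular R) :
    IsPiRegular R := by
  intro a
  obtain ⟨m, hm, e, _, he, -, ⟨u, rfl⟩, hpow, -, -, -⟩ := h a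
  refine ⟨m, hm, ↑u⁻¹, ?_⟩
  rw [hpow, Units.mul_inv_cancel_right, ← mul_assoc, ← sq, he]

theorem IsStronglyPiStarRegular.isStronglyStarClean
    (h : IsStronglyPiStarRegular R) : IsStronglyStarClean R := by
  intro a
  obtain ⟨m, hm, e, _, he, hse, ⟨u, rfl⟩, hpow, hae, -, heu⟩ := h a
  have he' : IsIdempotentElem e := (sq e).symm.trans he
  refine ⟨1 - e, a - (1 - e), sq (1 - e) ▸ he'.one_sub, (IsSelfAdjoint.one R).sub hse,
    he'.isUnit_sub_one_sub_of_pow_eq_mul_s10 (by omega) hae heu hpow, (add_sub_cancel _ _).symm, ?_⟩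
  exact (((Commute.one_left a).sub_left hae.symm).sub_right (Commute.refl _)).eq

end

/-- R is strongly *-clean and π-regular iff R is strongly π-*-regular. -/
theorem strongly_star_clean_pi_regular_iff_strongly_pi_star_regular {R : Type*}
    [Ring R] [StarRing R] :
    ((∀ a : R, ∃ p u : R, p ^ 2 = p ∧ star p = p ∧ IsUnit u ∧ a = p + u ∧
        p * u = u * p) ∧
      (∀ a : R, ∃ n : ℕ, 1 ≤ n ∧ ∃ b : R, a ^ n = a ^ n * b * a ^ n)) ↔
    (∀ a : R, ∃ m : ℕ, 1 ≤ m ∧ ∃ e u : R, e ^ 2 = e ∧ star e = e ∧ IsUnit u ∧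
      a ^ m = e * u ∧ a * e = e * a ∧ a * u = u * a ∧ e * u = u * e) :=
  show IsStronglyStarClean R ∧ IsPiRegular R ↔ IsStronglyPiStarRegular R from
    ⟨fun h ↦ h.1.isStronglyPiStarRegular h.2,
      fun h ↦ ⟨h.isStronglyStarClean, h.isPiRegular⟩⟩
end

section
/- Let R be a nontrivial *-ring and n ≥ 2. Then the matrix ring M_n(R), equipped with the involution sending a matrix A = (a_ij) to the conjugate transpose (star a_ji), is not strongly π-*-regular: there exists a matrix A ∈ M_n(R) for which there do not exist m ≥ 1, a projection E, and a unit U in M_n(R) with A^m = E*U and A, E, U pairwise commuting. -/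
/-!
If `a` is idempotent, then `a ^ m = a` for every `m ≥ 1`, so a decomposition `a ^ m = e * u`
with `a` and `e` commuting forces `a = e`: indeed `e = a * u⁻¹` gives `a * e = e`, while
`e * a = e * e * u = a`. Hence an idempotent element of a strongly π-*-regular ring is a
projection. In `Mₙ(R)` with `n ≥ 2` the matrix `E₀₀ + E₀₁` is idempotent but not self-adjoint.
-/

theorem IsIdempotentElem.eq_of_eq_mul_unit {M : Type*} [Monoid M] {a e : M} {u : Mˣ}
    (ha : IsIdempotentElem a) (he : IsIdempotentElem e) (hau : a = e * u)
    (hae : Commute a e) : a = e := by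
  have he_eq : e = a * ↑u⁻¹ := by rw [hau, Units.mul_inv_cancel_right]
  calc a = e * a := by rw [hau, ← mul_assoc, he.eq]
    _ = a * e := hae.eq.symm
    _ = e := by rw [he_eq, ← mul_assoc, ha.eq]

namespace Matrix

variable {ι R : Type*} [DecidableEq ι]

theorem isIdempotentElem_single_add_single [Fintype ι] [Semiring R] {i j : ι} (hij : i ≠ j) :
    IsIdempotentElem (single i i (1 : R) + single i j 1) := by
  simp [IsIdempotentElem, add_mul, mul_add, hij.symm]

theorem not_isSelfAdjoint_single_add_single [Semiring R] [StarRing R] [Nontrivial R]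
    {i j : ι} (hij : i ≠ j) : ¬ IsSelfAdjoint (single i i (1 : R) + single i j 1) := by
  intro h
  have h_entry := congr_fun₂ h i j
  simp [single_apply_of_ne, hij, hij.symm] at h_entry

end Matrix

/-- For a nontrivial *-ring R and n ≥ 2, the matrix ring Mₙ(R) with the
conjugate-transpose involution is not strongly π-*-regular. -/
theorem matrix_not_strongly_pi_star_regular {R : Type*} [Ring R] [StarRing R]
    [Nontrivial R] (n : ℕ) (hn : 2 ≤ n) :
    ∃ A : Matrix (Fin n) (Fin n) R,
      ¬ ∃ m : ℕ, 1 ≤ m ∧ ∃ E U : Matrix (Fin n) (Fin n) R,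
        E ^ 2 = E ∧ star E = E ∧ IsUnit U ∧ A ^ m = E * U ∧
        A * E = E * A ∧ A * U = U * A ∧ E * U = U * E := by
  let i₀ : Fin n := ⟨0, by omega⟩
  let i₁ : Fin n := ⟨1, by omega⟩
  have h01 : i₀ ≠ i₁ := by simp [i₀, i₁, Fin.ext_iff]
  refine ⟨Matrix.single i₀ i₀ 1 + Matrix.single i₀ i₁ 1, ?_⟩
  rintro ⟨m, hm, E, _, hE2, hEs, ⟨u, rfl⟩, hAm, hAE, -⟩
  have hidem := Matrix.isIdempotentElem_single_add_single (R := R) h01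
  rw [hidem.pow_eq (by omega)] at hAm
  refine Matrix.not_isSelfAdjoint_single_add_single (R := R) h01 ?_
  rw [hidem.eq_of_eq_mul_unit (by rw [IsIdempotentElem, ← sq, hE2]) hAm hAE]
  exact hEs
end

section
/- Let R be a strongly π-*-regular *-ring and let e be an idempotent of R. Then the corner ring eRe is strongly π-*-regular: for every a ∈ R with a = e*a*e, there exist an integer m ≥ 1 and elements p, u, v of R, all fixed by the corner (p = e*p*e, u = e*u*e, v = e*v*e), such that p^2 = p, star p = p, u*v = e = v*u, a^m = p*u, and a, p, u pairwise commute. -/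
/-!
Write `a ^ m = q * w` with `q` a projection and `w` a unit commuting with `a` and `q`. Since `a`
lies in `eRe`, so does `q = a ^ m * w⁻¹`; hence `e - q` is an idempotent orthogonal to `q`, and
`q * w` and `q * w⁻¹` are mutually inverse units of the smaller corner `qRq`. Adding `e - q` to
each turns them into mutually inverse units `u`, `v` of `eRe`, and still `a ^ m = q * u`.
-/

theorem pow_succ_mem {M A : Type*} [Monoid M] [SetLike A M] [MulMemClass A M] {S : A} {x : M}
    (hx : x ∈ S) : ∀ n : ℕ, x ^ (n + 1) ∈ S
  | 0 => by rwa [zero_add, pow_one]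
  | n + 1 => by rw [pow_succ]; exact mul_mem (pow_succ_mem hx n) hx

namespace NonUnitalRing

variable {R : Type*} [Ring R] {e q x y : R}

theorem mem_corner_iff (he : IsIdempotentElem e) : x ∈ corner e ↔ e * x = x ∧ x * e = x :=
  Subsemigroup.mem_corner_iff he

theorem mem_corner_iff_eq_mul_mul (he : IsIdempotentElem e) : x ∈ corner e ↔ x = e * x * e := by
  rw [mem_corner_iff he]
  refine ⟨fun ⟨hl, hr⟩ ↦ by rw [hl, hr], fun hx ↦ ⟨?_, ?_⟩⟩
  · rw [hx, ← mul_assoc, ← mul_assoc, he.eq]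
  · rw [hx, mul_assoc, he.eq]

theorem commute_of_mem_corner (he : IsIdempotentElem e) (hx : x ∈ corner e) : Commute x e :=
  ((mem_corner_iff he).1 hx).2.trans ((mem_corner_iff he).1 hx).1.symm

theorem self_mem_corner (he : IsIdempotentElem e) : e ∈ corner e :=
  ⟨e, show e * e * e = e by rw [he.eq, he.eq]⟩

theorem mul_mem_corner_of_commute (he : IsIdempotentElem e) (hq : q ∈ corner e) {z : R}
    (hqz : Commute q z) : q * z ∈ corner e := by
  obtain ⟨hl, hr⟩ := (mem_corner_iff he).1 hq
  rw [mem_corner_iff he, ← mul_assoc, hl, hqz.eq, mul_assoc, hr]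
  exact ⟨rfl, rfl⟩

theorem add_sub_mem_corner (he : IsIdempotentElem e) (hx : x ∈ corner e) (hq : q ∈ corner e) :
    x + (e - q) ∈ corner e :=
  add_mem hx (sub_mem (self_mem_corner he) hq)

theorem add_sub_mul_add_sub (he : IsIdempotentElem e) (hq : IsIdempotentElem q)
    (hqe : q ∈ corner e) (hx : x ∈ corner q) (hy : y ∈ corner q) (hxy : x * y = q) :
    (x + (e - q)) * (y + (e - q)) = e := by
  obtain ⟨heq, hqe⟩ := (mem_corner_iff he).1 hqe
  have hxq : x * q = x := ((mem_corner_iff hq).1 hx).2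
  have hqy : q * y = y := ((mem_corner_iff hq).1 hy).1
  have hx_ortho : x * (e - q) = 0 := by
    rw [mul_sub, hxq, ← hxq, mul_assoc, hqe, hxq, sub_self]
  have hy_ortho : (e - q) * y = 0 := by
    rw [sub_mul, hqy, ← hqy, ← mul_assoc, heq, hqy, sub_self]
  rw [add_mul, mul_add, mul_add, hxy, hx_ortho, hy_ortho, (hq.sub he hqe heq).eq]
  abel

theorem mul_add_sub (he : IsIdempotentElem e) (hq : IsIdempotentElem q)
    (hqe : q ∈ corner e) (hx : x ∈ corner q) : q * (x + (e - q)) = x := by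
  rw [mul_add, mul_sub, ((mem_corner_iff hq).1 hx).1, ((mem_corner_iff he).1 hqe).2, hq.eq,
    sub_self, add_zero]

end NonUnitalRing

theorem Commute.mul_mul_eq_of_mul_eq_one {R : Type*} [Monoid R] {q w w' : R}
    (hq : IsIdempotentElem q) (hqw : Commute q w) (hww' : w * w' = 1) :
    q * w * (q * w') = q := by
  rw [hqw.symm.mul_mul_mul_comm, hq.eq, hww', mul_one]

open NonUnitalRing

/-- Corner rings of strongly π-*-regular rings are strongly π-*-regular. -/
theorem corner_ring_strongly_pi_star_regular {R : Type*} [Ring R] [StarRing R]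
    (hR : ∀ a : R, ∃ m : ℕ, 1 ≤ m ∧ ∃ e u : R, e ^ 2 = e ∧ star e = e ∧ IsUnit u ∧
      a ^ m = e * u ∧ a * e = e * a ∧ a * u = u * a ∧ e * u = u * e)
    (e : R) (he : e ^ 2 = e) :
    ∀ a : R, a = e * a * e →
      ∃ m : ℕ, 1 ≤ m ∧ ∃ p u v : R,
        p = e * p * e ∧ u = e * u * e ∧ v = e * v * e ∧
        p ^ 2 = p ∧ star p = p ∧ u * v = e ∧ v * u = e ∧
        a ^ m = p * u ∧ a * p = p * a ∧ a * u = u * a ∧ p * u = u * p := by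
  intro a ha
  replace he : IsIdempotentElem e := (sq e).symm.trans he
  replace ha : a ∈ corner e := (mem_corner_iff_eq_mul_mul he).2 ha
  obtain ⟨m, hm, q, _, hq_sq, hq_star, ⟨w, rfl⟩, ham, haq, haw, hqw⟩ := hR a
  have hq : IsIdempotentElem q := (sq q).symm.trans hq_sq
  replace haq : Commute a q := haq
  replace haw : Commute a w := haw
  replace hqw : Commute q w := hqw
  obtain ⟨k, rfl⟩ : ∃ k, m = k + 1 := ⟨m - 1, by omega⟩
  have hqe : q ∈ corner e := by
    rw [show q = a ^ (k + 1) * ↑w⁻¹ by rw [ham, mul_assoc, Units.mul_inv, mul_one]]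
    exact mul_mem_corner_of_commute he (pow_succ_mem ha k) ((haw.pow_left _).units_inv_right)
  have hx := mul_mem_corner_of_commute hq (self_mem_corner hq) hqw
  have hy := mul_mem_corner_of_commute hq (self_mem_corner hq) hqw.units_inv_right
  have hu : q * w + (e - q) ∈ corner e :=
    add_sub_mem_corner he (mul_mem_corner_of_commute he hqe hqw) hqe
  have hv : q * ↑w⁻¹ + (e - q) ∈ corner e :=
    add_sub_mem_corner he (mul_mem_corner_of_commute he hqe hqw.units_inv_right) hqe
  refine ⟨k + 1, hm, q, _, _, (mem_corner_iff_eq_mul_mul he).1 hqe,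
    (mem_corner_iff_eq_mul_mul he).1 hu, (mem_corner_iff_eq_mul_mul he).1 hv, hq_sq, hq_star,
    add_sub_mul_add_sub he hq hqe hx hy (hqw.mul_mul_eq_of_mul_eq_one hq w.mul_inv),
    add_sub_mul_add_sub he hq hqe hy hx (hqw.units_inv_right.mul_mul_eq_of_mul_eq_one hq w.inv_mul),
    by rw [mul_add_sub he hq hqe hx, ham], haq, ?_, ?_⟩
  · exact (haq.mul_right haw).add_right ((commute_of_mem_corner he ha).sub_right haq)
  · exact ((Commute.refl q).mul_right hqw).add_right
      ((commute_of_mem_corner he hqe).sub_right (Commute.refl q))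
end

section
/- Let A be a symmetric real n × n matrix (A = Aᵀ). Then A is strongly π-*-regular in M_n(ℝ) with respect to the transpose involution: there exist an integer m ≥ 1, a matrix P with P^2 = P and Pᵀ = P, and an invertible matrix U, such that A^m = P*U and A, P, U pairwise commute. -/
/-!
A real symmetric matrix is orthogonally diagonalisable, and conjugation by an orthogonal matrix
is a `*`-automorphism of `M_n(ℝ)`, so it suffices to treat a diagonal matrix `diag d`. There one
can take `m = 1`: `diag d = diag e * diag u` with `e i = 0, u i = 1` where `d i = 0` and
`e i = 1, u i = d i` elsewhere.
-/

/-- Strong π-*-regularity with exponent `m = 1`. -/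
def IsStronglyStarRegular {R : Type*} [Monoid R] [Star R] (a : R) : Prop :=
  ∃ e u : R, IsStarProjection e ∧ IsUnit u ∧ a = e * u ∧
    Commute a e ∧ Commute a u ∧ Commute e u

namespace IsStronglyStarRegular

theorem map {R S F : Type*} [Monoid R] [Star R] [Monoid S] [Star S] [FunLike F R S]
    [MonoidHomClass F R S] [StarHomClass F R S] {a : R} (ha : IsStronglyStarRegular a)
    (f : F) : IsStronglyStarRegular (f a) := by
  obtain ⟨e, u, he, hu, rfl, hae, hau, heu⟩ := ha
  exact ⟨f e, f u, he.map f, hu.map f, map_mul f e u, hae.map f, hau.map f, heu.map f⟩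

theorem pi {ι : Type*} {R : ι → Type*} [∀ i, Monoid (R i)] [∀ i, Star (R i)] {a : ∀ i, R i}
    (ha : ∀ i, IsStronglyStarRegular (a i)) : IsStronglyStarRegular a := by
  choose e u he hu hae hcae hcau hceu using ha
  have he' : IsStarProjection e :=
    ⟨funext fun i => (he i).isIdempotentElem, Pi.isSelfAdjoint.mpr fun i => (he i).isSelfAdjoint⟩
  exact ⟨e, u, he', Pi.isUnit_iff.mpr hu, funext hae, Pi.commute_iff.mpr hcae,
    Pi.commute_iff.mpr hcau, Pi.commute_iff.mpr hceu⟩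

end IsStronglyStarRegular

theorem DivisionRing.isStronglyStarRegular {K : Type*} [DivisionRing K] [StarRing K] (a : K) :
    IsStronglyStarRegular a := by
  rcases eq_or_ne a 0 with rfl | ha
  · exact ⟨0, 1, .zero K, isUnit_one, (zero_mul 1).symm, .zero_right 0, .one_right 0,
      .zero_left 1⟩
  · exact ⟨1, a, .one K, ha.isUnit, (one_mul a).symm, .one_right a, .refl a, .one_left a⟩

namespace Matrix

variable (n R α : Type*) [Fintype n] [DecidableEq n] [CommSemiring R] [Semiring α]
  [StarAddMonoid α] [Algebra R α]

def diagonalStarAlgHom : (n → α) →⋆ₐ[R] Matrix n n α where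
  toAlgHom := diagonalAlgHom R
  map_star' v := (diagonal_conjTranspose v).symm

end Matrix

theorem Matrix.IsHermitian.isStronglyStarRegular {𝕜 n : Type*} [RCLike 𝕜] [Fintype n]
    [DecidableEq n] {A : Matrix n n 𝕜} (hA : A.IsHermitian) : IsStronglyStarRegular A := by
  have hdiag : IsStronglyStarRegular (diagonal (RCLike.ofReal ∘ hA.eigenvalues) : Matrix n n 𝕜) :=
    (IsStronglyStarRegular.pi fun _ => DivisionRing.isStronglyStarRegular _).map
      (diagonalStarAlgHom n 𝕜 𝕜)
  rw [hA.spectral_theorem]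
  exact hdiag.map (Unitary.conjStarAlgAut 𝕜 _ hA.eigenvectorUnitary)

/-- Any real symmetric matrix is strongly π-*-regular (with respect to the
transpose involution). -/
theorem symmetric_matrix_strongly_pi_star_regular {n : ℕ}
    (A : Matrix (Fin n) (Fin n) ℝ) (hA : A.transpose = A) :
    ∃ m : ℕ, 1 ≤ m ∧ ∃ P U : Matrix (Fin n) (Fin n) ℝ,
      P ^ 2 = P ∧ P.transpose = P ∧ IsUnit U ∧ A ^ m = P * U ∧
      A * P = P * A ∧ A * U = U * A ∧ P * U = U * P := by
  have hA' : A.IsHermitian := by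
    rwa [Matrix.IsHermitian, Matrix.conjTranspose_eq_transpose_of_trivial]
  obtain ⟨P, U, hP, hU, hAPU, hAP, hAU, hPU⟩ := hA'.isStronglyStarRegular
  have hPt : P.transpose = P := by
    rw [← Matrix.conjTranspose_eq_transpose_of_trivial]
    exact hP.isSelfAdjoint
  exact ⟨1, le_rfl, P, U, hP.pow_eq two_ne_zero, hPt, hU, by rwa [pow_one], hAP, hAU, hPU⟩
end

section
/- Let R be a strongly π-*-regular *-ring. Then for every x ∈ R, if (star x)*x = 0 then x is nilpotent. -/
/-! If `star x * x = 0` then also `star (x ^ m) * x ^ m = 0`. Writing `x ^ m = e * u` with `e` a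
projection and `u` a unit, `star (e * u) * (e * u) = star u * (e * u)`, and since `star u` is a
unit this forces `x ^ m = e * u = 0`. -/

theorem pow_mul_pow_eq_zero_of_mul_eq_zero {M : Type*} [MonoidWithZero M] {a b : M}
    (h : b * a = 0) {m : ℕ} (hm : m ≠ 0) : b ^ m * a ^ m = 0 := by
  obtain ⟨k, rfl⟩ := Nat.exists_eq_succ_of_ne_zero hm
  rw [pow_succ, pow_succ', mul_assoc, ← mul_assoc b, h, zero_mul, mul_zero]

namespace IsStarProjection

variable {R : Type*} [MonoidWithZero R] [StarMul R] {p u : R}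

theorem star_mul_mul_self (hp : IsStarProjection p) (u : R) :
    star (p * u) * (p * u) = star u * (p * u) := by
  rw [star_mul, hp.isSelfAdjoint.star_eq, mul_assoc, ← mul_assoc p, hp.isIdempotentElem.eq]

theorem mul_eq_zero_of_star_mul_self_eq_zero (hp : IsStarProjection p) (hu : IsUnit u)
    (h : star (p * u) * (p * u) = 0) : p * u = 0 :=
  hu.star.mul_right_eq_zero.mp (hp.star_mul_mul_self u ▸ h)

end IsStarProjection

/-- In a strongly π-*-regular *-ring, star x * x = 0 implies x nilpotent. -/
theorem strongly_pi_star_regular_star_mul_self_eq_zero_nilpotent {R : Type*}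
    [Ring R] [StarRing R]
    (hR : ∀ a : R, ∃ m : ℕ, 1 ≤ m ∧ ∃ e u : R, e ^ 2 = e ∧ star e = e ∧ IsUnit u ∧
      a ^ m = e * u ∧ a * e = e * a ∧ a * u = u * a ∧ e * u = u * e) :
    ∀ x : R, star x * x = 0 → IsNilpotent x := by
  intro x hx
  obtain ⟨m, hm, e, u, he2, hes, hu, hxm, -⟩ := hR x
  have he : IsStarProjection e := ⟨(sq e).symm.trans he2, hes⟩
  have hxm0 : star (x ^ m) * x ^ m = 0 := by
    rw [star_pow]
    exact pow_mul_pow_eq_zero_of_mul_eq_zero hx (by omega)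
  rw [hxm] at hxm0
  exact ⟨m, hxm.trans (he.mul_eq_zero_of_star_mul_self_eq_zero hu hxm0)⟩
end

section
/- Let R be a *-ring. The following are equivalent: (1) R has projection stable range one, i.e., for all a, b ∈ R, if aR + bR = R (there exist x, y with a*x + b*y = 1) then there exists a projection p with a + b*p a unit; (2) for all a, b ∈ R with aR + bR = R, there exists a projection p such that a + b*p is right invertible (has a right inverse); (3) for all a, b ∈ R with aR + bR = R, there exists a projection p such that a + b*p is left invertible (has a left inverse). -/
/-!
Each of the three conditions makes `R` Dedekind-finite, after which one-sided and two-sided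
invertibility of `a + b * p` coincide. If `u * w = 1`, the row `(w, 1 - w * u)` is unimodular;
for any `q`, the element `s = w + (1 - w * u) * q` still satisfies `u * s = 1`, so a right
inverse of `s` forces `s * u = 1`. For left inverses the row `(w, 0)` already suffices.
-/

theorem isDedekindFiniteMonoid_of_unimodular_exists_right_inv {R : Type*} [Ring R]
    (h : ∀ a b : R, (∃ x y : R, a * x + b * y = 1) → ∃ p w : R, (a + b * p) * w = 1) :
    IsDedekindFiniteMonoid R := by
  refine .of_exists_mul_self_eq_one _ fun u w huw => ?_
  obtain ⟨q, v, hv⟩ := h w (1 - w * u) ⟨u, 1, by noncomm_ring⟩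
  have hu_ann : u * (1 - w * u) = 0 := by
    rw [mul_sub, mul_one, ← mul_assoc, huw, one_mul, sub_self]
  have hus : u * (w + (1 - w * u) * q) = 1 := by
    rw [mul_add, ← mul_assoc, hu_ann, zero_mul, add_zero, huw]
  exact ⟨_, (left_inv_eq_right_inv hus hv).symm ▸ hv⟩

theorem isDedekindFiniteMonoid_of_unimodular_exists_left_inv {R : Type*} [Semiring R]
    (h : ∀ a b : R, (∃ x y : R, a * x + b * y = 1) → ∃ p w : R, w * (a + b * p) = 1) :
    IsDedekindFiniteMonoid R := by
  refine .of_exists_mul_self_eq_one _ fun u w huw => ?_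
  obtain ⟨p, v, hv⟩ := h u 0 ⟨w, 0, by rw [zero_mul, add_zero, huw]⟩
  exact ⟨v, by rwa [zero_mul, add_zero] at hv⟩

/-- Projection stable range one can be tested with right or left
invertibility. -/
theorem psr_one_tfae {R : Type*} [Ring R] [StarRing R] :
    List.TFAE [
      ∀ a b : R, (∃ x y : R, a * x + b * y = 1) →
        ∃ p : R, p ^ 2 = p ∧ star p = p ∧ IsUnit (a + b * p),
      ∀ a b : R, (∃ x y : R, a * x + b * y = 1) →
        ∃ p : R, p ^ 2 = p ∧ star p = p ∧ ∃ w : R, (a + b * p) * w = 1,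
      ∀ a b : R, (∃ x y : R, a * x + b * y = 1) →
        ∃ p : R, p ^ 2 = p ∧ star p = p ∧ ∃ w : R, w * (a + b * p) = 1] := by
  tfae_have 1 → 2 := fun h a b hab => (h a b hab).imp fun _ ⟨hsq, hstar, hu⟩ =>
    ⟨hsq, hstar, hu.exists_right_inv⟩
  tfae_have 1 → 3 := fun h a b hab => (h a b hab).imp fun _ ⟨hsq, hstar, hu⟩ =>
    ⟨hsq, hstar, hu.exists_left_inv⟩
  tfae_have 2 → 1 := by
    intro h a b hab
    have : IsDedekindFiniteMonoid R := isDedekindFiniteMonoid_of_unimodular_exists_right_inv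
      fun a b hab => (h a b hab).imp fun _ hp => hp.2.2
    obtain ⟨p, hsq, hstar, w, hw⟩ := h a b hab
    exact ⟨p, hsq, hstar, .of_mul_eq_one w hw⟩
  tfae_have 3 → 1 := by
    intro h a b hab
    have : IsDedekindFiniteMonoid R := isDedekindFiniteMonoid_of_unimodular_exists_left_inv
      fun a b hab => (h a b hab).imp fun _ hp => hp.2.2
    obtain ⟨p, hsq, hstar, w, hw⟩ := h a b hab
    exact ⟨p, hsq, hstar, .of_mul_eq_one_right w hw⟩
  tfae_finish
end

section
/- Let R be a strongly *-clean *-ring (every element of R is the sum of a projection and a unit which commute with each other). Then R has projection stable range one: for all a, b ∈ R, if there exist x, y with a*x + b*y = 1, then there exists a projection p such that a + b*p is a unit. -/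
/-!
Idempotents of a strongly *-clean ring are projections: if `e = p + u` is such a decomposition
of an idempotent, then `u = 1 - 2p`, so `e = 1 - p`. A ring in which all idempotents are
projections is abelian (all idempotents are central), hence Dedekind-finite, and relative to the
central idempotent `p` of a clean decomposition `a x = p + u` it splits as a product of the corners
`(1 - p) R` and `p R`. In the first corner `a` is already right invertible; in the second one,
`b` is right invertible and a clean decomposition `-(s a) = q + v`, where `s` is a right inverse
of `b` in that corner, makes `a + b q` right invertible. So `a + b (p q)` is right invertible,
hence a unit, and `p q` is an idempotent, hence a projection.
-/

theorem isDedekindFiniteMonoid_of_forall_isIdempotentElem_commute {M : Type*} [Monoid M]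
    (hcen : ∀ e : M, IsIdempotentElem e → ∀ x, Commute e x) : IsDedekindFiniteMonoid M where
  mul_eq_one_symm {c r} hcr := by
    have hrc : IsIdempotentElem (r * c) := by
      rw [IsIdempotentElem, mul_assoc, ← mul_assoc c, hcr, one_mul]
    have hrcc : r * c * c = c := by
      rw [(hcen _ hrc c).eq, ← mul_assoc, hcr, one_mul]
    calc r * c = r * c * (c * r) := by rw [hcr, mul_one]
      _ = c * r := by rw [← mul_assoc, hrcc]
      _ = 1 := hcr

theorem IsIdempotentElem.isUnit_mul_add_one_sub_mul_s19 {R : Type*} [Ring R]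
    [IsDedekindFiniteMonoid R] {e c d c' d' : R} (he : IsIdempotentElem e)
    (hc : Commute e c) (hd : Commute e d) (hcc' : e * (c * c') = e)
    (hdd' : (1 - e) * (d * d') = 1 - e) : IsUnit (e * c + (1 - e) * d) := by
  refine IsUnit.of_mul_eq_one (e * c' + (1 - e) * d') ?_
  rw [add_mul, mul_add, mul_add, hc.symm.mul_mul_mul_comm, hd.symm.mul_mul_mul_comm,
    ((Commute.one_left c).sub_left hc).symm.mul_mul_mul_comm,
    ((Commute.one_left d).sub_left hd).symm.mul_mul_mul_comm, he.eq, he.one_sub.eq,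
    he.mul_one_sub_self, he.one_sub_mul_self, zero_mul, zero_mul, add_zero, zero_add, hcc',
    hdd', add_sub_cancel]

theorem exists_isIdempotentElem_isUnit_add_mul_of_forall_commute {R : Type*} [Ring R]
    (hcen : ∀ e : R, IsIdempotentElem e → ∀ x, Commute e x)
    (hclean : ∀ a : R, ∃ p : R, ∃ u : Rˣ, IsIdempotentElem p ∧ a = p + u)
    {a b x y : R} (hxy : a * x + b * y = 1) :
    ∃ f : R, IsIdempotentElem f ∧ IsUnit (a + b * f) := by
  have := isDedekindFiniteMonoid_of_forall_isIdempotentElem_commute hcen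
  obtain ⟨p, u, hp, hax⟩ := hclean (a * x)
  have hpbs : p * (b * -(y * ↑u⁻¹)) = p := by
    calc p * (b * -(y * ↑u⁻¹)) = -(p * (a * x + b * y) - p * (a * x)) * ↑u⁻¹ := by
          noncomm_ring
      _ = p := by rw [hxy, hax, mul_add, hp.eq, mul_one, sub_add_cancel_left, neg_neg,
          mul_assoc, u.mul_inv, mul_one]
  set s := -(y * ↑u⁻¹)
  obtain ⟨q, v, hq, hsa⟩ := hclean (-(s * a))
  refine ⟨p * q, hp.mul_of_commute (hcen p hp q) hq, ?_⟩
  have hsplit : a + b * (p * q) = (1 - p) * a + (1 - (1 - p)) * (a + b * q) := by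
    rw [sub_sub_cancel, ← mul_assoc, ← (hcen p hp b).eq]
    noncomm_ring
  rw [hsplit]
  refine hp.one_sub.isUnit_mul_add_one_sub_mul_s19 (c' := x * ↑u⁻¹) (d' := -(↑v⁻¹ * s))
    (hcen _ hp.one_sub a) (hcen _ hp.one_sub _) ?_ ?_
  · calc (1 - p) * (a * (x * ↑u⁻¹)) = (1 - p) * (a * x) * ↑u⁻¹ := by noncomm_ring
      _ = 1 - p := by rw [hax, mul_add, hp.one_sub_mul_self, zero_add, mul_assoc,
          u.mul_inv, mul_one]
  · have hpd : p * (a + b * q) = -(p * b * v) := by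
      calc p * (a + b * q) = p * (b * s) * a + p * b * q := by rw [hpbs]; noncomm_ring
        _ = p * b * (-(-(s * a)) + q) := by noncomm_ring
        _ = -(p * b * v) := by rw [hsa]; noncomm_ring
    calc (1 - (1 - p)) * ((a + b * q) * -(↑v⁻¹ * s))
        = p * b * (↑v * ↑v⁻¹) * s := by rw [sub_sub_cancel, ← mul_assoc, hpd]; noncomm_ring
      _ = 1 - (1 - p) := by rw [v.mul_inv, mul_one, mul_assoc, hpbs, sub_sub_cancel]

theorem mul_mul_one_sub_eq_zero_of_forall_star_eq {R : Type*} [Ring R]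
    [StarRing R] (hstar : ∀ f : R, IsIdempotentElem f → star f = f) {e : R}
    (he : IsIdempotentElem e) (z : R) : e * z * (1 - e) = 0 := by
  have hf : IsIdempotentElem (e + e * z * (1 - e)) := by
    calc (e + e * z * (1 - e)) * (e + e * z * (1 - e))
        = e * e + e * e * z * (1 - e) + e * z * ((1 - e) * e)
          + e * z * ((1 - e) * e) * z * (1 - e) := by noncomm_ring
      _ = e + e * z * (1 - e) := by rw [he.eq, he.one_sub_mul_self]; simp
  have hsym : (1 - e) * star z * e = e * z * (1 - e) := by
    have := hstar _ hf
    simp only [star_add, star_mul, star_sub, star_one, hstar e he, ← mul_assoc] at this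
    exact add_left_cancel this
  calc e * z * (1 - e) = e * ((1 - e) * star z * e) := by rw [hsym, ← mul_assoc, ← mul_assoc,
        he.eq]
    _ = 0 := by rw [← mul_assoc, ← mul_assoc, he.mul_one_sub_self, zero_mul, zero_mul]

theorem commute_of_forall_star_eq {R : Type*} [Ring R] [StarRing R]
    (hstar : ∀ f : R, IsIdempotentElem f → star f = f) {e : R} (he : IsIdempotentElem e)
    (x : R) : Commute e x := by
  have hleft := mul_mul_one_sub_eq_zero_of_forall_star_eq hstar he x
  have hright := mul_mul_one_sub_eq_zero_of_forall_star_eq hstar he.one_sub x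
  rw [sub_sub_cancel] at hright
  calc e * x = e * x * (1 - e) + e * x * e := by noncomm_ring
    _ = (1 - e) * x * e + e * x * e := by rw [hleft, hright]
    _ = x * e := by noncomm_ring

namespace IsStronglyStarClean

variable {R : Type*} [Ring R] [StarRing R]

theorem exists_isIdempotentElem_add_unit (h : IsStronglyStarClean R) (a : R) :
    ∃ p : R, ∃ u : Rˣ, IsIdempotentElem p ∧ a = p + u := by
  obtain ⟨p, _, hp, -, ⟨u, rfl⟩, ha, -⟩ := h a
  exact ⟨p, u, (sq p).symm.trans hp, ha⟩

theorem star_eq_self_of_isIdempotentElem (h : IsStronglyStarClean R) {e : R}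
    (he : IsIdempotentElem e) : star e = e := by
  obtain ⟨p, u, hp, hps, hu, rfl, hpu⟩ := h e
  have hu' : (p + p + u - 1) * u = 0 := by
    calc (p + p + u - 1) * u
        = (p + u) * (p + u) - (p + u) - (p * p - p) + (p * u - u * p) := by noncomm_ring
      _ = 0 := by rw [he.eq, ← sq, hp, hpu]; simp
  have hpu' : p + u = 1 - p := by
    rw [← sub_eq_zero, ← hu.mul_left_eq_zero.mp hu']
    abel
  rw [hpu', star_sub, star_one, hps]

end IsStronglyStarClean

/-- A strongly *-clean ring has projection stable range one. -/
theorem strongly_star_clean_psr_one {R : Type*} [Ring R] [StarRing R]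
    (h : ∀ a : R, ∃ p u : R, p ^ 2 = p ∧ star p = p ∧ IsUnit u ∧ a = p + u ∧
      p * u = u * p) :
    ∀ a b : R, (∃ x y : R, a * x + b * y = 1) →
      ∃ p : R, p ^ 2 = p ∧ star p = p ∧ IsUnit (a + b * p) := by
  have hstar : ∀ e : R, IsIdempotentElem e → star e = e := fun _ ↦
    IsStronglyStarClean.star_eq_self_of_isIdempotentElem h
  rintro a b ⟨x, y, hxy⟩
  obtain ⟨f, hf, hunit⟩ := exists_isIdempotentElem_isUnit_add_mul_of_forall_commute
    (fun _ ↦ commute_of_forall_star_eq hstar)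
    (IsStronglyStarClean.exists_isIdempotentElem_add_unit h) hxy
  exact ⟨f, (sq f).trans hf.eq, hstar f hf, hunit⟩
end
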